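/- The infinite Fibonacci word f contains exactly four factors that are antisquares, namely 01, 10, 1001, and 10100101. -/

import Mathlib

/-- The Fibonacci morphism φ: 0 ↦ 01, 1 ↦ 0. -/
def fibPhi (w : List ℕ) : List ℕ := (w.map (fun c => if c = 0 then [0, 1] else [0])).flatten

/-- The infinite Fibonacci word f = 0100101001001⋯, the fixed point of φ starting with 0. -/
def fibWord (i : ℕ) : ℕ := ((fibPhi^[i + 2]) [0]).getD i 0

/-- A finite word is a factor of the infinite Fibonacci word. -/
def IsFibFactor (x : List ℕ) : Prop :=
  ∃ i : ℕ, x = (List.range x.length).map (fun t => fibWord (i + t))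

/-- An antisquare is a nonempty word of the form x x̄, where x̄ is the
bitwise complement of x. -/
def IsAntisquare (x : List ℕ) : Prop :=
  ∃ y : List ℕ, y ≠ [] ∧ x = y ++ y.map (fun c => 1 - c)

/-!
Every letter of `φ(w)` begins a block `01` or `0`, so `f = φ(f)` has no factor `11`; and
`φ²(w)` is a product of blocks `010` and `01` in which `10101` can only arise from two
adjacent blocks `01`, i.e. from a factor `11` of `w`, so `f` has no factor `10101` either.
If `y ȳ` avoids `11`, then `y` avoids both `00` and `11`, so it alternates; for `|y| ≥ 5`
the first five letters of `y` or of `ȳ` are then `10101`. The remaining words `y` of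
length at most four are checked one by one.
-/

@[simp]
theorem fibPhi_nil : fibPhi [] = [] := rfl

@[simp]
theorem fibPhi_cons_zero (w : List ℕ) : fibPhi (0 :: w) = 0 :: 1 :: fibPhi w := rfl

@[simp]
theorem fibPhi_cons_one (w : List ℕ) : fibPhi (1 :: w) = 0 :: fibPhi w := rfl

theorem fibPhi_cons_of_ne_zero {c : ℕ} (hc : c ≠ 0) (w : List ℕ) :
    fibPhi (c :: w) = 0 :: fibPhi w := by
  simp [fibPhi, hc]

theorem fibPhi_append (u v : List ℕ) : fibPhi (u ++ v) = fibPhi u ++ fibPhi v := by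
  simp [fibPhi]

theorem fibPhi_prefix_fibPhi {u v : List ℕ} (h : u <+: v) : fibPhi u <+: fibPhi v := by
  obtain ⟨t, rfl⟩ := h
  exact ⟨fibPhi t, (fibPhi_append u t).symm⟩

theorem length_fibPhi (w : List ℕ) : (fibPhi w).length = w.length + w.count 0 := by
  induction w with
  | nil => rfl
  | cons c w ih =>
    rcases eq_or_ne c 0 with rfl | hc
    · simp only [fibPhi_cons_zero, List.length_cons, List.count_cons_self, ih]
      omega
    · simp only [fibPhi_cons_of_ne_zero hc, List.length_cons, List.count_cons_of_ne hc, ih]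
      omega

theorem le_one_of_mem_fibPhi {w : List ℕ} {c : ℕ} (hc : c ∈ fibPhi w) : c ≤ 1 := by
  simp only [fibPhi, List.mem_flatten, List.mem_map] at hc
  obtain ⟨_, ⟨d, _, rfl⟩, hcd⟩ := hc
  split_ifs at hcd <;> simp at hcd <;> omega

theorem not_one_cons_prefix_fibPhi (w v : List ℕ) : ¬ 1 :: v <+: fibPhi w := by
  rcases w with _ | ⟨c, w⟩
  · simp
  · rcases eq_or_ne c 0 with rfl | hc <;> simp [fibPhi_cons_of_ne_zero, *]

theorem not_one_one_infix_fibPhi (w : List ℕ) : ¬ [1, 1] <:+: fibPhi w := by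
  induction w with
  | nil => simp
  | cons c w ih =>
    rcases eq_or_ne c 0 with rfl | hc
    · simp [List.infix_cons_iff, ih, not_one_cons_prefix_fibPhi]
    · simp [fibPhi_cons_of_ne_zero hc, List.infix_cons_iff, ih]

theorem not_one_zero_one_zero_one_infix_fibPhi_fibPhi {w : List ℕ} (hw : ∀ c ∈ w, c ≤ 1)
    (h11 : ¬ [1, 1] <:+: w) : ¬ [1, 0, 1, 0, 1] <:+: fibPhi (fibPhi w) := by
  induction w with
  | nil => simp
  | cons c w ih =>
    simp only [List.forall_mem_cons] at hw
    have ih := ih hw.2 fun h => h11 (h.trans (List.suffix_cons c w).isInfix)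
    obtain rfl | rfl : c = 0 ∨ c = 1 := by omega
    · simp [List.infix_cons_iff, ih, not_one_cons_prefix_fibPhi]
    · rcases w with _ | ⟨d, w⟩
      · decide
      obtain rfl | rfl : d = 0 ∨ d = 1 := by have := hw.2 d (by simp); omega
      · simpa [List.infix_cons_iff, not_one_cons_prefix_fibPhi] using ih
      · simp [List.infix_cons_iff] at h11

theorem iterate_fibPhi_prefix_succ (n : ℕ) : fibPhi^[n] [0] <+: fibPhi^[n + 1] [0] := by
  induction n with
  | zero => exact ⟨[1], rfl⟩
  | succ n ih =>
    rw [Function.iterate_succ_apply' _ n, Function.iterate_succ_apply' _ (n + 1)]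
    exact fibPhi_prefix_fibPhi ih

theorem iterate_fibPhi_prefix {m n : ℕ} (h : m ≤ n) : fibPhi^[m] [0] <+: fibPhi^[n] [0] :=
  Nat.rel_of_forall_rel_succ_of_le (· <+: ·) iterate_fibPhi_prefix_succ h

theorem lt_length_iterate_fibPhi (n : ℕ) : n < (fibPhi^[n] [0]).length := by
  induction n with
  | zero => simp
  | succ n ih =>
    have h0 : 0 < (fibPhi^[n] [0]).count 0 :=
      List.count_pos_iff.2 ((iterate_fibPhi_prefix n.zero_le).subset (by simp))
    rw [Function.iterate_succ_apply', length_fibPhi]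
    omega

theorem fibWord_eq_getElem {m i : ℕ} (h : i < (fibPhi^[m] [0]).length) :
    fibWord i = (fibPhi^[m] [0])[i] := by
  have hi : i < (fibPhi^[i + 2] [0]).length := (lt_length_iterate_fibPhi (i + 2)).trans' (by omega)
  rw [fibWord, List.getD_eq_getElem _ _ hi,
    (iterate_fibPhi_prefix (le_max_left (i + 2) m)).getElem hi,
    (iterate_fibPhi_prefix (le_max_right (i + 2) m)).getElem h]

theorem isFibFactor_iff {x : List ℕ} : IsFibFactor x ↔ ∃ m, x <:+: fibPhi^[m] [0] := by
  constructor
  · rintro ⟨i, hx⟩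
    have hlen := lt_length_iterate_fibPhi (i + x.length)
    refine ⟨i + x.length, List.infix_iff_getElem?.2 ⟨i, by omega, fun t ht => ?_⟩⟩
    rw [List.getElem_of_eq hx, List.getElem?_eq_getElem (by omega), Option.some_inj]
    simp only [List.getElem_map, List.getElem_range, add_comm t]
    exact (fibWord_eq_getElem _).symm
  · rintro ⟨m, hx⟩
    obtain ⟨k, hk, hxk⟩ := List.infix_iff_getElem?.1 hx
    refine ⟨k, List.ext_getElem (by simp) fun t ht _ => ?_⟩
    have := hxk t ht
    rw [List.getElem?_eq_getElem (by omega), Option.some_inj] at this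
    simp only [List.getElem_map, List.getElem_range, ← this, add_comm t]
    exact (fibWord_eq_getElem _).symm

theorem le_one_of_mem_iterate_fibPhi {n c : ℕ} (hc : c ∈ fibPhi^[n] [0]) : c ≤ 1 := by
  cases n with
  | zero => simp_all
  | succ n =>
    rw [Function.iterate_succ_apply'] at hc
    exact le_one_of_mem_fibPhi hc

theorem not_one_one_infix_iterate_fibPhi (n : ℕ) : ¬ [1, 1] <:+: fibPhi^[n] [0] := by
  cases n with
  | zero => decide
  | succ n =>
    rw [Function.iterate_succ_apply']
    exact not_one_one_infix_fibPhi _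

theorem not_one_zero_one_zero_one_infix_iterate_fibPhi (n : ℕ) :
    ¬ [1, 0, 1, 0, 1] <:+: fibPhi^[n] [0] := by
  match n with
  | 0 | 1 => decide
  | n + 2 =>
    rw [Function.iterate_succ_apply', Function.iterate_succ_apply']
    exact not_one_zero_one_zero_one_infix_fibPhi_fibPhi (fun _ => le_one_of_mem_iterate_fibPhi)
      (not_one_one_infix_iterate_fibPhi n)

def binaryWords : ℕ → List (List ℕ)
  | 0 => [[]]
  | n + 1 => (binaryWords n).flatMap fun w => [0 :: w, 1 :: w]

theorem mem_binaryWords {w : List ℕ} (hw : ∀ c ∈ w, c ≤ 1) : w ∈ binaryWords w.length := by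
  induction w with
  | nil => simp [binaryWords]
  | cons c w ih =>
    simp only [List.forall_mem_cons] at hw
    simp only [binaryWords, List.length_cons, List.mem_flatMap, List.mem_cons, List.cons.injEq,
      List.not_mem_nil, or_false]
    exact ⟨w, ih hw.2, (Nat.le_one_iff_eq_zero_or_eq_one.1 hw.1).imp (⟨·, rfl⟩) (⟨·, rfl⟩)⟩

theorem antisquare_mem_of_not_infix {y : List ℕ} (hy : y ≠ []) (hbin : ∀ c ∈ y, c ≤ 1)
    (h11 : ¬ [1, 1] <:+: y ++ y.map (fun c => 1 - c))
    (h10101 : ¬ [1, 0, 1, 0, 1] <:+: y ++ y.map (fun c => 1 - c)) :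
    y ++ y.map (fun c => 1 - c) ∈ [[0, 1], [1, 0], [1, 0, 0, 1], [1, 0, 1, 0, 0, 1, 0, 1]] := by
  rcases le_or_gt y.length 4 with hn | hn
  · have hsmall : ∀ n ∈ List.range 5, ∀ y ∈ binaryWords n, y ≠ [] →
        [1, 1] <:+: y ++ y.map (fun c => 1 - c) ∨ [1, 0, 1, 0, 1] <:+: y ++ y.map (fun c => 1 - c) ∨
        y ++ y.map (fun c => 1 - c) ∈ [[0, 1], [1, 0], [1, 0, 0, 1], [1, 0, 1, 0, 0, 1, 0, 1]] := by
      decide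
    exact ((hsmall _ (List.mem_range.2 (by omega)) y (mem_binaryWords hbin) hy).resolve_left
      h11).resolve_left h10101
  · have hfive : ∀ a ∈ binaryWords 5, [1, 1] <:+: a ∨ [1, 1] <:+: a.map (fun c => 1 - c) ∨
        [1, 0, 1, 0, 1] <:+: a ∨ [1, 0, 1, 0, 1] <:+: a.map (fun c => 1 - c) := by
      decide
    have ha := mem_binaryWords (w := y.take 5) fun c hc => hbin c (List.mem_of_mem_take hc)
    rw [List.length_take, Nat.min_eq_left hn] at ha
    have h : y.take 5 <:+: y ++ y.map (fun c => 1 - c) :=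
      (List.take_prefix 5 y).isInfix.trans (List.prefix_append _ _).isInfix
    have h' : (y.take 5).map (fun c => 1 - c) <:+: y ++ y.map (fun c => 1 - c) := by
      rw [List.map_take]
      exact (List.take_prefix _ _).isInfix.trans (List.suffix_append _ _).isInfix
    rcases hfive _ ha with h₁ | h₁ | h₁ | h₁
    exacts [(h11 (h₁.trans h)).elim, (h11 (h₁.trans h')).elim, (h10101 (h₁.trans h)).elim,
      (h10101 (h₁.trans h')).elim]

/-- The Fibonacci word contains exactly four antisquare factors:
01, 10, 1001, and 10100101. -/
theorem fibWord_antisquares :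
    {x : List ℕ | IsFibFactor x ∧ IsAntisquare x} =
      {[0, 1], [1, 0], [1, 0, 0, 1], [1, 0, 1, 0, 0, 1, 0, 1]} := by
  ext x
  simp only [Set.mem_ofPred_eq, Set.mem_insert_iff, Set.mem_singleton_iff]
  constructor
  · rintro ⟨hx, y, hy, rfl⟩
    obtain ⟨m, hm⟩ := isFibFactor_iff.1 hx
    have hbin : ∀ c ∈ y, c ≤ 1 := fun c hc =>
      le_one_of_mem_iterate_fibPhi (hm.subset (List.mem_append_left _ hc))
    simpa using antisquare_mem_of_not_infix hy hbin
      (fun h => not_one_one_infix_iterate_fibPhi m (h.trans hm))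
      (fun h => not_one_zero_one_zero_one_infix_iterate_fibPhi m (h.trans hm))
  · rintro (rfl | rfl | rfl | rfl)
    · exact ⟨isFibFactor_iff.2 ⟨6, by decide⟩, [0], List.cons_ne_nil _ _, rfl⟩
    · exact ⟨isFibFactor_iff.2 ⟨6, by decide⟩, [1], List.cons_ne_nil _ _, rfl⟩
    · exact ⟨isFibFactor_iff.2 ⟨6, by decide⟩, [1, 0], List.cons_ne_nil _ _, rfl⟩
    · exact ⟨isFibFactor_iff.2 ⟨6, by decide⟩, [1, 0, 1, 0], List.cons_ne_nil _ _, rfl⟩
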